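/- Let ‖·‖ be a norm on c₀₀ satisfying the Figiel–Johnson implicit equation. Let 3 ≤ m < n, r ∈ (0,1], δ > 0, and set x₀ = r(e_m + e_n). If y ∈ c₀₀ satisfies ‖y‖ ≤ 1 and |y_i − (x₀)_i| ≤ δ for every i ∈ {1,…,n}, then ‖y − P_n y‖ ≤ 2(1 − r + nδ), where P_n y is the restriction of y to coordinates 1,…,n. -/

import Mathlib

open Filter Topology

/-- The coordinatewise restriction of a finitely supported sequence to a finite index set. -/
noncomputable def restrF (E : Finset ℕ) (ξ : ℕ →₀ ℝ) : ℕ →₀ ℝ :=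
  Finsupp.filter (· ∈ E) ξ

/-- The sup-norm of a finitely supported sequence. -/
noncomputable def supNormF (ξ : ℕ →₀ ℝ) : ℝ := ⨆ i, |ξ i|

/-- The set of values appearing in the inner supremum of the Figiel–Johnson implicit
equation: all numbers `(1/2) ∑_{j<k} ‖E_j ξ‖` over chains `E 0 < ... < E (k-1)` of
nonempty finite sets with `k ≤ min (E 0)`. -/
def tsirelsonSet (nrm : (ℕ →₀ ℝ) → ℝ) (ξ : ℕ →₀ ℝ) : Set ℝ :=
  {r | ∃ (k : ℕ) (E : ℕ → Finset ℕ), 1 ≤ k ∧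
    (∀ j < k, (E j).Nonempty) ∧
    (∀ j, j + 1 < k → ∀ a ∈ E j, ∀ b ∈ E (j + 1), a < b) ∧
    (∀ i ∈ E 0, k ≤ i) ∧
    r = (1 / 2) * ∑ j ∈ Finset.range k, nrm (restrF (E j) ξ)}

/-- `nrm` is a norm on `c₀₀` satisfying the Figiel–Johnson implicit equation. -/
def IsTsirelsonNorm (nrm : (ℕ →₀ ℝ) → ℝ) : Prop :=
  (∀ ξ η, nrm (ξ + η) ≤ nrm ξ + nrm η) ∧
  (∀ (c : ℝ) (ξ), nrm (c • ξ) = |c| * nrm ξ) ∧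
  (∀ ξ, nrm ξ = 0 ↔ ξ = 0) ∧
  (∀ ξ, nrm ξ = max (supNormF ξ) (sSup (tsirelsonSet nrm ξ)))

/-! The sets `{m} < {n} < supp (y - Pₙ y)` are admissible in the Figiel–Johnson equation because
`3 ≤ m`, so `|y m| + |y n| + ‖y - Pₙ y‖ ≤ 2 ‖y‖ ≤ 2`, and both coordinates are at least `r - δ`.
For the supremum in the equation to dominate its members it must be bounded: admissible sets are
pairwise disjoint, so by the triangle inequality every admissible sum is at most
`∑ i ∈ supp ξ, |ξ i| * ‖e i‖`. -/

lemma restrF_apply (E : Finset ℕ) (ξ : ℕ →₀ ℝ) (i : ℕ) :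
    restrF E ξ i = if i ∈ E then ξ i else 0 :=
  Finsupp.filter_apply _ _ _

lemma abs_le_supNormF (ξ : ℕ →₀ ℝ) (i : ℕ) : |ξ i| ≤ supNormF ξ := by
  refine le_ciSup (f := fun i => |ξ i|) ⟨∑ j ∈ ξ.support, |ξ j|, ?_⟩ i
  rintro _ ⟨j, rfl⟩
  dsimp only
  by_cases hj : j ∈ ξ.support
  · exact Finset.single_le_sum (fun i _ => abs_nonneg (ξ i)) hj
  · rw [Finsupp.notMem_support_iff.mp hj, abs_zero]
    exact Finset.sum_nonneg fun i _ => abs_nonneg _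

lemma exists_restrF_eq_tail (ξ : ℕ →₀ ℝ) (b : ℕ) :
    ∃ T : Finset ℕ, T.Nonempty ∧ (∀ i ∈ T, b < i) ∧ restrF T ξ = ξ - ξ.filter (· ≤ b) := by
  set z := ξ - ξ.filter (· ≤ b)
  have hz : ∀ i, z i = if i ≤ b then 0 else ξ i := by
    intro i
    by_cases hi : i ≤ b <;> simp [z, hi]
  have hT : ∀ i ∈ insert (b + 1) z.support, b < i := by
    intro i hi
    rcases Finset.mem_insert.mp hi with rfl | hi
    · omega
    · by_contra hib
      exact Finsupp.mem_support_iff.mp hi (by rw [hz, if_pos (not_lt.mp hib)])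
  refine ⟨_, Finset.insert_nonempty _ _, hT, ?_⟩
  ext i
  rw [restrF_apply]
  by_cases hi : i ∈ insert (b + 1) z.support
  · rw [if_pos hi, hz, if_neg (not_le.mpr (hT i hi))]
  · rw [if_neg hi, Finsupp.notMem_support_iff.mp fun h' => hi (Finset.mem_insert_of_mem h')]

lemma lt_of_mem_chain {k : ℕ} {E : ℕ → Finset ℕ} (hne : ∀ j < k, (E j).Nonempty)
    (hlt : ∀ j, j + 1 < k → ∀ a ∈ E j, ∀ b ∈ E (j + 1), a < b)
    {j₁ j₂ : ℕ} (h₁₂ : j₁ < j₂) (h₂ : j₂ < k) {a b : ℕ} (ha : a ∈ E j₁) (hb : b ∈ E j₂) :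
    a < b := by
  induction j₂, h₁₂ using Nat.le_induction generalizing b with
  | base => exact hlt j₁ h₂ a ha b hb
  | succ j hj ih =>
    obtain ⟨c, hc⟩ := hne j (by omega)
    exact (ih (by omega) hc).trans (hlt j h₂ c hc b hb)

lemma pairwiseDisjoint_of_chain {k : ℕ} {E : ℕ → Finset ℕ} (hne : ∀ j < k, (E j).Nonempty)
    (hlt : ∀ j, j + 1 < k → ∀ a ∈ E j, ∀ b ∈ E (j + 1), a < b) :
    (↑(Finset.range k) : Set ℕ).PairwiseDisjoint E := by
  intro j₁ h₁ j₂ h₂ hne₁₂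
  simp only [Finset.coe_range, Set.mem_Iio] at h₁ h₂
  refine Finset.disjoint_left.mpr fun i hi₁ hi₂ => ?_
  rcases hne₁₂.lt_or_gt with h | h
  · exact (lt_of_mem_chain hne hlt h h₂ hi₁ hi₂).false
  · exact (lt_of_mem_chain hne hlt h h₁ hi₂ hi₁).false

namespace IsTsirelsonNorm

variable {nrm : (ℕ →₀ ℝ) → ℝ}

lemma map_zero (h : IsTsirelsonNorm nrm) : nrm 0 = 0 :=
  (h.2.2.1 0).2 rfl

lemma nonneg (h : IsTsirelsonNorm nrm) (ξ : ℕ →₀ ℝ) : 0 ≤ nrm ξ := by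
  have hneg : nrm (-ξ) = nrm ξ := by simpa using h.2.1 (-1) ξ
  have := h.1 ξ (-ξ)
  rw [add_neg_cancel, h.map_zero, hneg] at this
  linarith

lemma abs_apply_le (h : IsTsirelsonNorm nrm) (ξ : ℕ →₀ ℝ) (i : ℕ) : |ξ i| ≤ nrm ξ :=
  (abs_le_supNormF ξ i).trans (h.2.2.2 ξ ▸ le_max_left _ _)

lemma le_sum_support (h : IsTsirelsonNorm nrm) (ξ : ℕ →₀ ℝ) :
    nrm ξ ≤ ∑ i ∈ ξ.support, |ξ i| * nrm (Finsupp.single i 1) := by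
  conv_lhs => rw [← Finsupp.sum_single ξ]
  refine (Finset.le_sum_of_subadditive nrm h.map_zero.le h.1 _ _).trans_eq
    (Finset.sum_congr rfl fun i _ => ?_)
  rw [← h.2.1, Finsupp.smul_single_one]

lemma sum_restrF_le (h : IsTsirelsonNorm nrm) {k : ℕ} {E : ℕ → Finset ℕ}
    (hdisj : (↑(Finset.range k) : Set ℕ).PairwiseDisjoint E) (ξ : ℕ →₀ ℝ) :
    ∑ j ∈ Finset.range k, nrm (restrF (E j) ξ) ≤
      ∑ i ∈ ξ.support, |ξ i| * nrm (Finsupp.single i 1) := by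
  set w : ℕ → ℝ := fun i => |ξ i| * nrm (Finsupp.single i 1)
  have hpiece : ∀ j, nrm (restrF (E j) ξ) ≤ ∑ i ∈ ξ.support.filter (· ∈ E j), w i := by
    intro j
    refine (h.le_sum_support _).trans_eq (Finset.sum_congr rfl fun i hi => ?_)
    rw [restrF_apply, if_pos (Finset.mem_filter.mp hi).2]
  have hdisj' : (↑(Finset.range k) : Set ℕ).PairwiseDisjoint
      fun j => ξ.support.filter (· ∈ E j) :=
    hdisj.mono fun j i hi => (Finset.mem_filter.mp hi).2
  calc ∑ j ∈ Finset.range k, nrm (restrF (E j) ξ)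
      ≤ ∑ j ∈ Finset.range k, ∑ i ∈ ξ.support.filter (· ∈ E j), w i :=
        Finset.sum_le_sum fun j _ => hpiece j
    _ = ∑ i ∈ (Finset.range k).biUnion fun j => ξ.support.filter (· ∈ E j), w i :=
        (Finset.sum_biUnion hdisj').symm
    _ ≤ ∑ i ∈ ξ.support, w i :=
        Finset.sum_le_sum_of_subset_of_nonneg
          (Finset.biUnion_subset.mpr fun j _ => Finset.filter_subset _ _)
          fun i _ _ => mul_nonneg (abs_nonneg _) (h.nonneg _)

lemma bddAbove_tsirelsonSet (h : IsTsirelsonNorm nrm) (ξ : ℕ →₀ ℝ) :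
    BddAbove (tsirelsonSet nrm ξ) := by
  refine ⟨(1 / 2) * ∑ i ∈ ξ.support, |ξ i| * nrm (Finsupp.single i 1), ?_⟩
  rintro _ ⟨k, E, -, hne, hlt, -, rfl⟩
  gcongr
  exact h.sum_restrF_le (pairwiseDisjoint_of_chain hne hlt) ξ

lemma le_of_mem_tsirelsonSet (h : IsTsirelsonNorm nrm) {ξ : ℕ →₀ ℝ} {t : ℝ}
    (ht : t ∈ tsirelsonSet nrm ξ) : t ≤ nrm ξ :=
  (le_csSup (h.bddAbove_tsirelsonSet ξ) ht).trans (h.2.2.2 ξ ▸ le_max_right _ _)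

lemma abs_apply_le_restrF (h : IsTsirelsonNorm nrm) (ξ : ℕ →₀ ℝ) {E : Finset ℕ} {i : ℕ}
    (hi : i ∈ E) : |ξ i| ≤ nrm (restrF E ξ) := by
  simpa [restrF_apply, hi] using h.abs_apply_le (restrF E ξ) i

lemma abs_add_abs_add_tail_le (h : IsTsirelsonNorm nrm) (ξ : ℕ →₀ ℝ) {a b : ℕ} (ha : 3 ≤ a)
    (hab : a < b) : |ξ a| + |ξ b| + nrm (ξ - ξ.filter (· ≤ b)) ≤ 2 * nrm ξ := by
  obtain ⟨T, hTne, hT, hT_tail⟩ := exists_restrF_eq_tail ξ b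
  let E : ℕ → Finset ℕ := fun
    | 0 => {a}
    | 1 => {b}
    | _ => T
  have hmem : (1 / 2) * ∑ j ∈ Finset.range 3, nrm (restrF (E j) ξ) ∈ tsirelsonSet nrm ξ := by
    refine ⟨3, E, by norm_num, ?_, ?_, ?_, rfl⟩
    · intro j hj
      interval_cases j
      exacts [Finset.singleton_nonempty a, Finset.singleton_nonempty b, hTne]
    · intro j hj c hc d hd
      obtain rfl | rfl : j = 0 ∨ j = 1 := by omega
      · rw [Finset.mem_singleton.mp hc, Finset.mem_singleton.mp hd]
        exact hab
      · exact Finset.mem_singleton.mp hc ▸ hT d hd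
    · intro i hi
      rw [Finset.mem_singleton.mp hi]
      exact ha
  have hsum := h.le_of_mem_tsirelsonSet hmem
  simp only [Finset.sum_range_succ, Finset.sum_range_zero, zero_add, E, hT_tail] at hsum
  have hξa := h.abs_apply_le_restrF ξ (Finset.mem_singleton_self a)
  have hξb := h.abs_apply_le_restrF ξ (Finset.mem_singleton_self b)
  linarith

end IsTsirelsonNorm

theorem tsirelson_tail_estimate (nrm : (ℕ →₀ ℝ) → ℝ) (h : IsTsirelsonNorm nrm)
    (m n : ℕ) (hm : 3 ≤ m) (hmn : m < n)
    (r δ : ℝ)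
    (y : ℕ →₀ ℝ) (hy : nrm y ≤ 1)
    (hclose : ∀ i, 1 ≤ i → i ≤ n →
      |y i - (r • (Finsupp.single m (1 : ℝ) + Finsupp.single n (1 : ℝ))) i| ≤ δ) :
    nrm (y - Finsupp.filter (· ≤ n) y) ≤ 2 * (1 - r + n * δ) := by
  have hcoord : ∀ i, i = m ∨ i = n → r - δ ≤ |y i| := by
    intro i hi
    have hx₀ : (r • (Finsupp.single m (1 : ℝ) + Finsupp.single n (1 : ℝ))) i = r := by
      rcases hi with rfl | rfl <;> simp [hmn.ne, hmn.ne']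
    have hclose_i := hclose i (by omega) (by omega)
    rw [hx₀] at hclose_i
    linarith [(abs_sub_le_iff.mp hclose_i).2, le_abs_self (y i)]
  have hδ : 0 ≤ δ := (abs_nonneg _).trans (hclose n (by omega) le_rfl)
  have hn : (1 : ℝ) ≤ n := by exact_mod_cast (by omega : 1 ≤ n)
  have htail := h.abs_add_abs_add_tail_le y hm hmn
  nlinarith [hcoord m (.inl rfl), hcoord n (.inr rfl)]
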